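/- arXiv:2406.03036 — 3 statements merged into one kernel-verified Lean document; each statement's English description precedes it below -/
import Mathlib

section
/- Let G be a claw-free graph and x a vertex of G. Then the local completion G*_x is also claw-free. -/
/-- A graph is claw-free if it contains no induced `K_{1,3}`. -/
def ClawFree {V : Type*} (G : SimpleGraph V) : Prop :=
  ∀ x a b c : V, G.Adj x a → G.Adj x b → G.Adj x c →
    a ≠ b → a ≠ c → b ≠ c →
    ¬ G.Adj a b → ¬ G.Adj a c → ¬ G.Adj b c → False

/-- The local completion of `G` at `x`: add all missing edges between neighbors of `x`. -/
def localCompletion {V : Type*} (G : SimpleGraph V) (x : V) : SimpleGraph V where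
  Adj u v := u ≠ v ∧ (G.Adj u v ∨ (G.Adj x u ∧ G.Adj x v))
  symm := ⟨fun _ _ h => ⟨h.1.symm, h.2.imp (fun h' => h'.symm) (fun h' => ⟨h'.2, h'.1⟩)⟩⟩
  loopless := ⟨fun _ h => h.1 rfl⟩

/-- A graph is Hamilton-connected if any two distinct vertices are joined by a
Hamiltonian path. -/
def HamiltonConnected {V : Type*} [DecidableEq V] (G : SimpleGraph V) : Prop :=
  ∀ u v : V, u ≠ v → ∃ p : G.Walk u v, p.IsHamiltonian

/-- `x` is eligible in `G`: its neighborhood induces a connected noncomplete graph. -/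
def Eligible {V : Type*} (G : SimpleGraph V) (x : V) : Prop :=
  (G.induce (G.neighborSet x)).Connected ∧
  ∃ a b : V, G.Adj x a ∧ G.Adj x b ∧ a ≠ b ∧ ¬ G.Adj a b

private lemma claw_aux {V : Type*} {G : SimpleGraph V} (hG : ClawFree G)
    {x v a b c : V} (hxv : G.Adj x v) (hxa : G.Adj x a)
    (hvb : G.Adj v b) (hvc : G.Adj v c) (hbc : b ≠ c)
    (nGab : ¬ G.Adj a b) (nGac : ¬ G.Adj a c) (nGbc : ¬ G.Adj b c)
    (nXab : ¬ (G.Adj x a ∧ G.Adj x b)) (nXac : ¬ (G.Adj x a ∧ G.Adj x c)) : False := by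
  have nxb : ¬ G.Adj x b := fun h => nXab ⟨hxa, h⟩
  have nxc : ¬ G.Adj x c := fun h => nXac ⟨hxa, h⟩
  have xneb : x ≠ b := fun h => nGab (h ▸ hxa).symm
  have xnec : x ≠ c := fun h => nGac (h ▸ hxa).symm
  exact hG v x b c hxv.symm hvb hvc xneb xnec hbc nxb nxc nGbc

/-- The local completion of a claw-free graph is claw-free. -/
theorem statement15 {V : Type*} (G : SimpleGraph V) (hG : ClawFree G) (x : V) :
    ClawFree (localCompletion G x) := by
  intro v a b c hva hvb hvc hab hac hbc nab nac nbc
  obtain ⟨-, hva2⟩ := hva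
  obtain ⟨-, hvb2⟩ := hvb
  obtain ⟨-, hvc2⟩ := hvc
  have nab' : ¬ (G.Adj a b ∨ (G.Adj x a ∧ G.Adj x b)) := fun h => nab ⟨hab, h⟩
  have nac' : ¬ (G.Adj a c ∨ (G.Adj x a ∧ G.Adj x c)) := fun h => nac ⟨hac, h⟩
  have nbc' : ¬ (G.Adj b c ∨ (G.Adj x b ∧ G.Adj x c)) := fun h => nbc ⟨hbc, h⟩
  have GnAB : ¬ G.Adj a b := fun h => nab' (Or.inl h)
  have GnAC : ¬ G.Adj a c := fun h => nac' (Or.inl h)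
  have GnBC : ¬ G.Adj b c := fun h => nbc' (Or.inl h)
  have XnAB : ¬ (G.Adj x a ∧ G.Adj x b) := fun h => nab' (Or.inr h)
  have XnAC : ¬ (G.Adj x a ∧ G.Adj x c) := fun h => nac' (Or.inr h)
  have XnBC : ¬ (G.Adj x b ∧ G.Adj x c) := fun h => nbc' (Or.inr h)
  by_cases h1 : G.Adj v a
  · by_cases h2 : G.Adj v b
    · by_cases h3 : G.Adj v c
      · exact hG v a b c h1 h2 h3 hab hac hbc GnAB GnAC GnBC
      · obtain ⟨hxv, hxc⟩ := hvc2.resolve_left h3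
        exact claw_aux hG hxv hxc h1 h2 hab (fun h => GnAC h.symm)
          (fun h => GnBC h.symm) GnAB (fun h => XnAC ⟨h.2, h.1⟩) (fun h => XnBC ⟨h.2, h.1⟩)
    · obtain ⟨hxv, hxb⟩ := hvb2.resolve_left h2
      have h3 : G.Adj v c := hvc2.resolve_right (fun h => XnBC ⟨hxb, h.2⟩)
      exact claw_aux hG hxv hxb h1 h3 hac (fun h => GnAB h.symm) GnBC GnAC
        (fun h => XnAB ⟨h.2, h.1⟩) XnBC
  · obtain ⟨hxv, hxa⟩ := hva2.resolve_left h1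
    have h2 : G.Adj v b := hvb2.resolve_right (fun h => XnAB ⟨hxa, h.2⟩)
    have h3 : G.Adj v c := hvc2.resolve_right (fun h => XnAC ⟨hxa, h.2⟩)
    exact claw_aux hG hxv hxa h2 h3 hbc GnAB GnAC GnBC XnAB XnAC
end

section
/- Let G be a simple graph and let M = {x_1, ..., x_k} be a finite set of vertices of G. Then the iterated local completion G*_M = ((G*_{x_1})*_{x_2}) ... *_{x_k} does not depend on the order in which the vertices of M are processed; i.e., for any permutation σ of {1,...,k}, performing local completions at x_{σ(1)}, ..., x_{σ(k)} in order yields the same graph. -/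
lemma lc_key {V : Type*} (G : SimpleGraph V) (x y u v : V) :
    ((G.Adj u v ∨ (G.Adj x u ∧ G.Adj x v)) ∨
      ((y ≠ u ∧ (G.Adj y u ∨ (G.Adj x y ∧ G.Adj x u))) ∧
       (y ≠ v ∧ (G.Adj y v ∨ (G.Adj x y ∧ G.Adj x v))))) →
    ((G.Adj u v ∨ (G.Adj y u ∧ G.Adj y v)) ∨
      ((x ≠ u ∧ (G.Adj x u ∨ (G.Adj y x ∧ G.Adj y u))) ∧
       (x ≠ v ∧ (G.Adj x v ∨ (G.Adj y x ∧ G.Adj y v))))) := by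
  rintro ((h | ⟨hxu, hxv⟩) | ⟨⟨hyu, hu⟩, ⟨hyv, hv⟩⟩)
  · exact Or.inl (Or.inl h)
  · exact Or.inr ⟨⟨hxu.ne, Or.inl hxu⟩, ⟨hxv.ne, Or.inl hxv⟩⟩
  · rcases hu with hu | ⟨hxy, hxu⟩ <;> rcases hv with hv | ⟨hxy', hxv⟩
    · exact Or.inl (Or.inr ⟨hu, hv⟩)
    · by_cases hx : x = u
      · subst hx; exact Or.inl (Or.inl hxv)
      · exact Or.inr ⟨⟨hx, Or.inr ⟨hxy'.symm, hu⟩⟩, ⟨hxv.ne, Or.inl hxv⟩⟩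
    · by_cases hx : x = v
      · subst hx; exact Or.inl (Or.inl hxu.symm)
      · exact Or.inr ⟨⟨hxu.ne, Or.inl hxu⟩, ⟨hx, Or.inr ⟨hxy.symm, hv⟩⟩⟩
    · exact Or.inr ⟨⟨hxu.ne, Or.inl hxu⟩, ⟨hxv.ne, Or.inl hxv⟩⟩


lemma lc_comm {V : Type*} (G : SimpleGraph V) (x y : V) :
    localCompletion (localCompletion G x) y = localCompletion (localCompletion G y) x := by
  ext u v
  show (u ≠ v ∧ _) ↔ (u ≠ v ∧ _)
  constructor <;> rintro ⟨huv, h⟩ <;> refine ⟨huv, ?_⟩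
  · have h' := lc_key G x y u v (h.imp (fun h => h.2) id)
    exact h'.imp (fun h'' => ⟨huv, h''⟩) id
  · have h' := lc_key G y x u v (h.imp (fun h => h.2) id)
    exact h'.imp (fun h'' => ⟨huv, h''⟩) id

/-- The iterated local completion over a set of vertices does not depend on the order
in which the vertices are processed. -/
theorem statement16 {V : Type*} (G : SimpleGraph V) (l₁ l₂ : List V)
    (hnd : l₁.Nodup) (hperm : l₁.Perm l₂) :
    List.foldl localCompletion G l₁ = List.foldl localCompletion G l₂ := by
  clear hnd
  induction hperm generalizing G with
  | nil => rfl
  | cons x p ih => exact ih _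
  | swap x y l => simp only [List.foldl_cons, lc_comm]
  | trans p q ih₁ ih₂ => exact (ih₁ G).trans (ih₂ G)
end

section
/- Let Γ_3 be the graph obtained by joining two vertex-disjoint triangles by a path of length 3, with vertices t_1, t_2, p_1, p_2, p_3, p_4, t_3, t_4 (triangles t_1 t_2 p_1 and p_4 t_3 t_4, path p_1 p_2 p_3 p_4). Let G be a {K_{1,3}, Γ_3}-free graph, let x be a vertex of G, and suppose F is an induced subgraph of the local completion G*_x with F ≅ Γ_3 whose triangle edge t_1 t_2 is the only edge of F not in G. Then G contains an induced claw, a contradiction; equivalently, if F ≅ Γ_3 is induced in G*_x and some triangle of F contains new edges, then an edge of that triangle incident to the path (e.g. t_1 p_1) is new. -/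
/-- The graph `Γ_i`: two vertex-disjoint triangles joined by a path with `i` edges.
Vertex `0 = t₁`, `1 = t₂`, `2, …, i+2` are the path vertices `p₁, …, p_{i+1}`,
`i+3 = t₃`, `i+4 = t₄`. -/
def gammaGraph (i : ℕ) : SimpleGraph (Fin (i + 5)) :=
  SimpleGraph.fromRel (fun a b =>
    ((a : ℕ) = 0 ∧ (b : ℕ) = 1) ∨ ((a : ℕ) = 0 ∧ (b : ℕ) = 2) ∨
    ((a : ℕ) = 1 ∧ (b : ℕ) = 2) ∨
    (2 ≤ (a : ℕ) ∧ (b : ℕ) = (a : ℕ) + 1 ∧ (b : ℕ) ≤ i + 2) ∨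
    ((a : ℕ) = i + 2 ∧ (b : ℕ) = i + 3) ∨ ((a : ℕ) = i + 2 ∧ (b : ℕ) = i + 4) ∨
    ((a : ℕ) = i + 3 ∧ (b : ℕ) = i + 4))

/-- `G` contains no induced subgraph isomorphic to `Γ_i`. -/
def GammaFree {V : Type*} (i : ℕ) (G : SimpleGraph V) : Prop :=
  IsEmpty (gammaGraph i ↪g G)

/-- If `G` is `{K_{1,3}, Γ₃}`-free and `f` gives an induced copy of `Γ₃` in the local
completion `G*_x` in which the triangle edge `t₁ t₂` (indices `0, 1`) is the only edge
not belonging to `G`, then we reach a contradiction (indeed `{p₁, t₁, t₂, p₂}` would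
induce a claw in `G`). -/
theorem statement17 {V : Type*} (G : SimpleGraph V)
    (hclaw : ClawFree G) (hgamma : GammaFree 3 G) (x : V)
    (f : gammaGraph 3 ↪g localCompletion G x)
    (hnew : ¬ G.Adj (f 0) (f 1))
    (hold : ∀ a b : Fin 8, (gammaGraph 3).Adj a b →
      ¬ ((a = 0 ∧ b = 1) ∨ (a = 1 ∧ b = 0)) → G.Adj (f a) (f b)) :
    False := by

  have h20 : G.Adj (f 2) (f 0) := hold 2 0 (by simp only [gammaGraph, SimpleGraph.fromRel_adj]; decide) (by decide)
  have h21 : G.Adj (f 2) (f 1) := hold 2 1 (by simp only [gammaGraph, SimpleGraph.fromRel_adj]; decide) (by decide)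
  have h23 : G.Adj (f 2) (f 3) := hold 2 3 (by simp only [gammaGraph, SimpleGraph.fromRel_adj]; decide) (by decide)
  have n03 : ¬ G.Adj (f 0) (f 3) := fun h => by
    have : (gammaGraph 3).Adj 0 3 := f.map_rel_iff.mp ⟨h.ne, Or.inl h⟩
    exact absurd this (by simp only [gammaGraph, SimpleGraph.fromRel_adj]; decide)
  have n13 : ¬ G.Adj (f 1) (f 3) := fun h => by
    have : (gammaGraph 3).Adj 1 3 := f.map_rel_iff.mp ⟨h.ne, Or.inl h⟩
    exact absurd this (by simp only [gammaGraph, SimpleGraph.fromRel_adj]; decide)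
  exact hclaw (f 2) (f 0) (f 1) (f 3) h20 h21 h23
    (fun h => (by decide : (0:Fin 8) ≠ 1) (f.injective h))
    (fun h => (by decide : (0:Fin 8) ≠ 3) (f.injective h))
    (fun h => (by decide : (1:Fin 8) ≠ 3) (f.injective h))
    hnew n03 n13
end
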